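/- Consider the directed formation in ℝ² with four agents at p_1 = (−1,1), p_2 = (1,1), p_3 = (1,−1), p_4 = (−1,−1) and directed edge set E = {(1,4), (1,2), (2,3), (2,4), (3,4)}. Then Null(L_B) = span{𝟏⊗I_2, p}; that is, every x ∈ ℝ⁸ with L_B x = 0 is of the form x = c • p + (v, v, v, v) for some c ∈ ℝ and v ∈ ℝ². In particular this formation is both infinitesimally bearing rigid and bearing persistent. -/

import Mathlib

open scoped InnerProductSpace

/-- The orthogonal projection matrix `P_x = I − x xᵀ/‖x‖²` onto the orthogonal
complement of a nonzero vector `x ∈ ℝᵈ`, as a linear map. -/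
noncomputable def projP {d : ℕ} (x : EuclideanSpace ℝ (Fin d)) :
    EuclideanSpace ℝ (Fin d) →ₗ[ℝ] EuclideanSpace ℝ (Fin d) :=
  LinearMap.id - (‖x‖ ^ 2)⁻¹ • ((innerSL ℝ x).toLinearMap.smulRight x)

/-- The linear map sending a configuration `x = (x_1, …, x_n)` to `x_j − x_i`. -/
noncomputable def relpos {d n : ℕ} (i j : Fin n) :
    (Fin n → EuclideanSpace ℝ (Fin d)) →ₗ[ℝ] EuclideanSpace ℝ (Fin d) :=
  LinearMap.proj (R := ℝ) (φ := fun _ : Fin n => EuclideanSpace ℝ (Fin d)) j -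
    LinearMap.proj (R := ℝ) (φ := fun _ : Fin n => EuclideanSpace ℝ (Fin d)) i

/-- The bearing `g_ij = (p_j − p_i)/‖p_j − p_i‖` of edge `(i, j)`. -/
noncomputable def bearing {d n : ℕ} (p : Fin n → EuclideanSpace ℝ (Fin d))
    (i j : Fin n) : EuclideanSpace ℝ (Fin d) :=
  ‖p j - p i‖⁻¹ • (p j - p i)

/-- The bearing rigidity matrix `R_B` of the formation `G(p)`: the linear map
`ℝ^{dn} → ℝ^{d|E|}` whose component for edge `(i,j) ∈ E` is
`(1/‖e_ij‖) P_{g_ij} (x_j − x_i)`. -/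
noncomputable def RB {d n : ℕ} (E : Finset (Fin n × Fin n))
    (p : Fin n → EuclideanSpace ℝ (Fin d)) :
    (Fin n → EuclideanSpace ℝ (Fin d)) →ₗ[ℝ] (↥E → EuclideanSpace ℝ (Fin d)) :=
  LinearMap.pi fun e =>
    ‖p e.1.2 - p e.1.1‖⁻¹ • (projP (bearing p e.1.1 e.1.2) ∘ₗ relpos e.1.1 e.1.2)

/-- The bearing Laplacian `L_B` of the formation `G(p)`: the linear map
`ℝ^{dn} → ℝ^{dn}` whose `i`-th `ℝᵈ`-block is `∑_{j : (i,j) ∈ E} P_{g_ij}(x_i − x_j)`. -/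
noncomputable def LB {d n : ℕ} (E : Finset (Fin n × Fin n))
    (p : Fin n → EuclideanSpace ℝ (Fin d)) :
    (Fin n → EuclideanSpace ℝ (Fin d)) →ₗ[ℝ] (Fin n → EuclideanSpace ℝ (Fin d)) :=
  LinearMap.pi fun i =>
    ∑ j ∈ Finset.univ.filter (fun j => (i, j) ∈ E),
      (projP (bearing p i j) ∘ₗ relpos j i)

/-- The subspace `span{𝟏 ⊗ I_d, p} = {c • p + (v, …, v) : c ∈ ℝ, v ∈ ℝᵈ}` of
translations and scalings of the configuration `p`. -/
def transScale {d n : ℕ} (p : Fin n → EuclideanSpace ℝ (Fin d)) :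
    Set (Fin n → EuclideanSpace ℝ (Fin d)) :=
  {x | ∃ (c : ℝ) (v : EuclideanSpace ℝ (Fin d)), x = c • p + fun _ => v}

/-- The four agents of the unit-square formation:
`p_1 = (−1,1)`, `p_2 = (1,1)`, `p_3 = (1,−1)`, `p_4 = (−1,−1)`. -/
noncomputable def pSquare : Fin 4 → EuclideanSpace ℝ (Fin 2) := fun i =>
  (WithLp.equiv 2 (Fin 2 → ℝ)).symm (![![-1, 1], ![1, 1], ![1, -1], ![-1, -1]] i)

/-- The directed edge set `{(1,4), (1,2), (2,3), (2,4), (3,4)}` (with agents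
indexed `1,…,4` as `0,…,3`). -/
def Ep : Finset (Fin 4 × Fin 4) := {(0, 3), (0, 1), (1, 2), (1, 3), (2, 3)}

/-
On an edge with `p_i ≠ p_j` the factor `1/‖e_ij‖` is nonzero and `P_{g_ij} = P_{e_ij}`, so each
component of `R_B x = 0` kills the matching summand of `L_B x`: `Null(R_B) ⊆ Null(L_B)`. For
`x = c • p + (v, …, v)` one has `x_j − x_i = c • e_ij`, which `P_{e_ij}` annihilates, so
`span{𝟏 ⊗ I₂, p} ⊆ Null(R_B)`. The content is `Null(L_B) ⊆ span{𝟏 ⊗ I₂, p}`: all edges of the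
square except the diagonal `(2,4)` are axis-parallel, so `L_B x` can be written out explicitly,
and its vanishing gives five independent scalar equations on `ℝ⁸`, whose three-dimensional
solution space is spanned by the two translations and the scaling.
-/

section Projection

variable {d : ℕ}

lemma projP_apply (u y : EuclideanSpace ℝ (Fin d)) :
    projP u y = y - (‖u‖ ^ 2)⁻¹ • (⟪u, y⟫_ℝ • u) := rfl

lemma projP_smul {a : ℝ} (ha : a ≠ 0) (u : EuclideanSpace ℝ (Fin d)) :
    projP (a • u) = projP u := by
  ext1 y
  rcases eq_or_ne u 0 with rfl | hu
  · simp
  have : ‖u‖ ≠ 0 := norm_ne_zero_iff.mpr hu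
  simp only [projP_apply, real_inner_smul_left, norm_smul, Real.norm_eq_abs, mul_pow, sq_abs,
    smul_smul]
  field_simp

lemma projP_apply_smul_self (u : EuclideanSpace ℝ (Fin d)) (c : ℝ) : projP u (c • u) = 0 := by
  rcases eq_or_ne u 0 with rfl | hu
  · simp
  have : ‖u‖ ≠ 0 := norm_ne_zero_iff.mpr hu
  rw [projP_apply, real_inner_smul_right, real_inner_self_eq_norm_sq, smul_smul,
    show (‖u‖ ^ 2)⁻¹ * (c * ‖u‖ ^ 2) = c by field_simp, sub_self]

lemma projP_apply_fin_two (u y : EuclideanSpace ℝ (Fin 2)) (k : Fin 2) :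
    projP u y k = y k - (u 0 * y 0 + u 1 * y 1) / (u 0 ^ 2 + u 1 ^ 2) * u k := by
  have hnorm : ‖u‖ ^ 2 = u 0 ^ 2 + u 1 ^ 2 := by
    simp [EuclideanSpace.norm_sq_eq, Fin.sum_univ_two]
  simp [projP_apply, hnorm, PiLp.inner_apply, Fin.sum_univ_two]
  ring

end Projection

section BearingMatrices

variable {d n : ℕ} {E : Finset (Fin n × Fin n)} {p : Fin n → EuclideanSpace ℝ (Fin d)}

lemma projP_bearing {i j : Fin n} (h : p j ≠ p i) :
    projP (bearing p i j) = projP (p j - p i) :=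
  projP_smul (inv_ne_zero (norm_ne_zero_iff.mpr (sub_ne_zero.mpr h))) _

lemma RB_apply (x : Fin n → EuclideanSpace ℝ (Fin d)) (e : E) :
    RB E p x e =
      ‖p e.1.2 - p e.1.1‖⁻¹ • projP (bearing p e.1.1 e.1.2) (x e.1.2 - x e.1.1) :=
  rfl

lemma LB_apply (x : Fin n → EuclideanSpace ℝ (Fin d)) (i : Fin n) :
    LB E p x i =
      ∑ j ∈ Finset.univ.filter (fun j => (i, j) ∈ E), projP (bearing p i j) (x i - x j) := by
  simp [LB, relpos]

lemma LB_apply_of_ne (hp : ∀ e ∈ E, p e.2 ≠ p e.1) (x : Fin n → EuclideanSpace ℝ (Fin d))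
    (i : Fin n) :
    LB E p x i =
      ∑ j ∈ Finset.univ.filter (fun j => (i, j) ∈ E), projP (p j - p i) (x i - x j) := by
  rw [LB_apply]
  exact Finset.sum_congr rfl fun j hj => by rw [projP_bearing (hp _ (Finset.mem_filter.mp hj).2)]

lemma transScale_subset_ker_RB : transScale p ⊆ LinearMap.ker (RB E p) := by
  rintro _ ⟨c, v, rfl⟩
  rw [SetLike.mem_coe, LinearMap.mem_ker]
  funext e
  have hdiff : (c • p + fun _ => v : Fin n → EuclideanSpace ℝ (Fin d)) e.1.2 -
      (c • p + fun _ => v : Fin n → EuclideanSpace ℝ (Fin d)) e.1.1 =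
        c • (p e.1.2 - p e.1.1) := by
    simp only [Pi.add_apply, Pi.smul_apply, smul_sub]
    abel
  rw [RB_apply, hdiff]
  rcases eq_or_ne (p e.1.2) (p e.1.1) with h | h
  · simp [h]
  · rw [projP_bearing h, projP_apply_smul_self, smul_zero, Pi.zero_apply]

lemma ker_RB_le_ker_LB (hp : ∀ e ∈ E, p e.2 ≠ p e.1) :
    LinearMap.ker (RB E p) ≤ LinearMap.ker (LB E p) := by
  intro x hx
  rw [LinearMap.mem_ker] at hx ⊢
  have hedge : ∀ i j, (i, j) ∈ E → projP (bearing p i j) (x j - x i) = 0 := by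
    intro i j hij
    have := congrFun hx ⟨(i, j), hij⟩
    rw [RB_apply, Pi.zero_apply] at this
    exact (smul_eq_zero.mp this).resolve_left
      (inv_ne_zero (norm_ne_zero_iff.mpr (sub_ne_zero.mpr (hp _ hij))))
  funext i
  rw [LB_apply, Pi.zero_apply]
  refine Finset.sum_eq_zero fun j hj => ?_
  rw [← neg_sub, map_neg, hedge i j (Finset.mem_filter.mp hj).2, neg_zero]

end BearingMatrices

section Square

lemma pSquare_apply (i : Fin 4) (k : Fin 2) :
    pSquare i k = ![![-1, 1], ![1, 1], ![1, -1], ![-1, -1]] i k := rfl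

lemma pSquare_injective : Function.Injective pSquare := by
  intro i j h
  have h0 := congrArg (· 0) h
  have h1 := congrArg (· 1) h
  simp only [pSquare_apply] at h0 h1
  revert h0 h1
  fin_cases i <;> fin_cases j <;> norm_num

lemma pSquare_ne_of_mem_Ep : ∀ e ∈ Ep, pSquare e.2 ≠ pSquare e.1 := fun e he =>
  pSquare_injective.ne (by fin_cases he <;> decide)

lemma LB_square_apply (x : Fin 4 → EuclideanSpace ℝ (Fin 2)) :
    LB Ep pSquare x =
      ![!₂[x 0 0 - x 3 0, x 0 1 - x 1 1],
        !₂[x 1 0 - x 2 0 + ((x 1 0 - x 3 0) - (x 1 1 - x 3 1)) / 2,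
          ((x 1 1 - x 3 1) - (x 1 0 - x 3 0)) / 2],
        !₂[0, x 2 1 - x 3 1],
        0] := by
  funext i
  ext k
  rw [LB_apply_of_ne pSquare_ne_of_mem_Ep]
  fin_cases i <;> fin_cases k <;>
    simp [Finset.sum_filter, Fin.sum_univ_four, Ep, projP_apply_fin_two, pSquare_apply] <;> ring

lemma mem_transScale_square_of_LB_eq_zero {x : Fin 4 → EuclideanSpace ℝ (Fin 2)}
    (hx : LB Ep pSquare x = 0) : x ∈ transScale pSquare := by
  have hblock (i : Fin 4) (k : Fin 2) : LB Ep pSquare x i k = 0 := by rw [hx]; rfl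
  have h00 : x 0 0 - x 3 0 = 0 := by simpa [LB_square_apply] using hblock 0 0
  have h01 : x 0 1 - x 1 1 = 0 := by simpa [LB_square_apply] using hblock 0 1
  have h11 : (x 1 1 - x 3 1) - (x 1 0 - x 3 0) = 0 := by
    simpa [LB_square_apply] using hblock 1 1
  have h10 : x 1 0 - x 2 0 + ((x 1 0 - x 3 0) - (x 1 1 - x 3 1)) / 2 = 0 := by
    simpa [LB_square_apply] using hblock 1 0
  have h21 : x 2 1 - x 3 1 = 0 := by simpa [LB_square_apply] using hblock 2 1
  refine ⟨(x 1 0 - x 0 0) / 2, !₂[(x 1 0 + x 0 0) / 2, (x 0 1 + x 3 1) / 2], ?_⟩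
  funext i
  ext k
  fin_cases i <;> fin_cases k <;> simp [pSquare_apply] <;> linarith

end Square

/-- For the square formation with directed edges `{(1,4),(1,2),(2,3),(2,4),(3,4)}`,
`Null(L_B) = span{𝟏 ⊗ I_2, p}`; in particular the formation is both
infinitesimally bearing rigid and bearing persistent. -/
theorem stmt16 :
    (LinearMap.ker (LB Ep pSquare) : Set (Fin 4 → EuclideanSpace ℝ (Fin 2))) =
      transScale pSquare ∧
    (LinearMap.ker (RB Ep pSquare) : Set (Fin 4 → EuclideanSpace ℝ (Fin 2))) =
      transScale pSquare ∧
    LinearMap.ker (LB Ep pSquare) = LinearMap.ker (RB Ep pSquare) := by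
  have hLT : (LinearMap.ker (LB Ep pSquare) : Set (Fin 4 → EuclideanSpace ℝ (Fin 2))) ⊆
      transScale pSquare := fun _ hx => mem_transScale_square_of_LB_eq_zero hx
  have hTR : transScale pSquare ⊆ LinearMap.ker (RB Ep pSquare) := transScale_subset_ker_RB
  have hRL : LinearMap.ker (RB Ep pSquare) ≤ LinearMap.ker (LB Ep pSquare) :=
    ker_RB_le_ker_LB pSquare_ne_of_mem_Ep
  exact ⟨hLT.antisymm (hTR.trans hRL), (Set.Subset.trans hRL hLT).antisymm hTR,
    le_antisymm (hLT.trans hTR) hRL⟩
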